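/- Let M = (1-t)·A + D - λ·I, where t, λ ∈ ℝ are arbitrary, I is the identity, D is the 2D discretization matrix, and A is any real matrix indexed by Fin m × Fin n that is block diagonal with symmetric tridiagonal blocks, i.e. A (i,j) (i',j') = 0 unless i = i' and |j - j'| ≤ 1, and A is symmetric. Then the rows of M indexed by grid points (i,j) with i ≥ 2 form a linearly independent family, and likewise the rows of M indexed by grid points (i,j) with i ≤ m-1 form a linearly independent family. -/

import Mathlib

/-!
Off the diagonal blocks `A` and `λ I` vanish, so `M` couples grid row `i` only to the rows `i ± 1`,
and only along a fixed column `j`, with the nonzero weight `-1/(2h₁²)`. Hence among the grid points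
`(i', j')` with `i' ≥ i`, the point `(i, j)` is the only one whose row of `M` is nonzero at
`(i - 1, j)`: the rows indexed by `i ≥ 1` are triangular with respect to these pivot columns, so
they are linearly independent. The rows with `i + 2 ≤ m` are treated the same way with the pivots
`(i + 1, j)`, in decreasing order of `i`.
-/

theorem linearIndependent_of_pivot {ι κ R α : Type*} [Fintype ι] [Ring R] [NoZeroDivisors R]
    [Preorder α] [WellFoundedLT α] (M : ι → κ → R) (σ : ι → κ) (r : ι → α)
    (hpivot : ∀ i, M i (σ i) ≠ 0)
    (hzero : ∀ i i', i' ≠ i → ¬r i' < r i → M i' (σ i) = 0) :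
    LinearIndependent R M := by
  rw [Fintype.linearIndependent_iff]
  intro g hg i
  induction i using (InvImage.wf r wellFounded_lt).induction with
  | _ i ih =>
    have hcol : ∑ i', g i' * M i' (σ i) = 0 := by
      simpa [Finset.sum_apply] using congrFun hg (σ i)
    have hsingle : ∑ i', g i' * M i' (σ i) = g i * M i (σ i) := by
      refine Finset.sum_eq_single i (fun i' _ hne => ?_) (by simp)
      by_cases hlt : r i' < r i
      · rw [ih i' hlt, zero_mul]
      · rw [hzero i i' hne hlt, mul_zero]
    exact (mul_eq_zero.mp (hsingle ▸ hcol)).resolve_right (hpivot i)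

section GridRows

variable {m : ℕ} {κ R : Type*} [Fintype κ] [Ring R] [NoZeroDivisors R]
  {M : Matrix (Fin m × κ) (Fin m × κ) R}

theorem linearIndependent_rows_one_le_of_blockTridiagonal
    (hsupp : ∀ p q, M p q ≠ 0 → p.1 = q.1 ∨ (p.2 = q.2 ∧ |(p.1 : ℤ) - q.1| = 1))
    (hcoup : ∀ (a b : Fin m) j, |(a : ℤ) - b| = 1 → M (a, j) (b, j) ≠ 0) :
    LinearIndependent R (fun p : {p : Fin m × κ // 1 ≤ (p.1 : ℕ)} => M p.1) := by
  refine linearIndependent_of_pivot _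
    (fun p => (⟨p.1.1 - 1, by omega⟩, p.1.2)) (fun p => (p.1.1 : ℕ)) ?_ ?_
  · rintro ⟨p, hp⟩
    exact hcoup _ _ _ (by rw [abs_eq (by norm_num)]; dsimp only; omega)
  · rintro ⟨p, hp⟩ ⟨p', hp'⟩ hne hle
    by_contra h
    rcases hsupp _ _ h with h | ⟨h2, h⟩
    · simp only [Fin.ext_iff] at h; dsimp only at hle; omega
    · rw [abs_eq (by norm_num)] at h
      dsimp only at hle h h2
      have hrow : p'.1 = p.1 := Fin.ext (by omega)
      exact hne (Subtype.ext (Prod.ext hrow h2))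

theorem linearIndependent_rows_add_two_le_of_blockTridiagonal
    (hsupp : ∀ p q, M p q ≠ 0 → p.1 = q.1 ∨ (p.2 = q.2 ∧ |(p.1 : ℤ) - q.1| = 1))
    (hcoup : ∀ (a b : Fin m) j, |(a : ℤ) - b| = 1 → M (a, j) (b, j) ≠ 0) :
    LinearIndependent R (fun p : {p : Fin m × κ // (p.1 : ℕ) + 2 ≤ m} => M p.1) := by
  refine linearIndependent_of_pivot _
    (fun p => (⟨p.1.1 + 1, by omega⟩, p.1.2)) (fun p => m - (p.1.1 : ℕ)) ?_ ?_
  · rintro ⟨p, hp⟩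
    exact hcoup _ _ _ (by rw [abs_eq (by norm_num)]; dsimp only; omega)
  · rintro ⟨p, hp⟩ ⟨p', hp'⟩ hne hle
    by_contra h
    rcases hsupp _ _ h with h | ⟨h2, h⟩
    · simp only [Fin.ext_iff] at h; dsimp only at hle; omega
    · rw [abs_eq (by norm_num)] at h
      dsimp only at hle h h2
      have hrow : p'.1 = p.1 := Fin.ext (by omega)
      exact hne (Subtype.ext (Prod.ext hrow h2))

end GridRows

theorem stmt_16 (m n : ℕ)
    (h₁ : ℝ) (hh₁ : 0 < h₁)
    (D : Matrix (Fin m × Fin n) (Fin m × Fin n) ℝ)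
    (hDhor : ∀ (i i' : Fin m) (j : Fin n), |(i : ℤ) - (i' : ℤ)| = 1 →
      D (i, j) (i', j) = -(1 / (2 * h₁ ^ 2)))
    (hDzero : ∀ p q : Fin m × Fin n, p ≠ q →
      ¬(p.1 = q.1 ∧ |(p.2 : ℤ) - (q.2 : ℤ)| = 1) →
      ¬(p.2 = q.2 ∧ |(p.1 : ℤ) - (q.1 : ℤ)| = 1) → D p q = 0)
    (A : Matrix (Fin m × Fin n) (Fin m × Fin n) ℝ)
    (hAblock : ∀ p q : Fin m × Fin n,
      (p.1 ≠ q.1 ∨ 2 ≤ |(p.2 : ℤ) - (q.2 : ℤ)|) → A p q = 0)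
    (t lam : ℝ)
    (M : Matrix (Fin m × Fin n) (Fin m × Fin n) ℝ)
    (hM : M = (1 - t) • A + D - lam • (1 : Matrix (Fin m × Fin n) (Fin m × Fin n) ℝ)) :
    LinearIndependent ℝ (fun p : {p : Fin m × Fin n // 1 ≤ (p.1 : ℕ)} => M p.1) ∧
    LinearIndependent ℝ (fun p : {p : Fin m × Fin n // (p.1 : ℕ) + 2 ≤ m} => M p.1) := by
  have hM_off : ∀ p q : Fin m × Fin n, p.1 ≠ q.1 → M p q = D p q := by
    intro p q h
    have hpq : p ≠ q := fun e => h (congrArg Prod.fst e)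
    simp [hM, Matrix.one_apply_ne hpq, hAblock p q (Or.inl h)]
  have hsupp : ∀ p q, M p q ≠ 0 → p.1 = q.1 ∨ (p.2 = q.2 ∧ |(p.1 : ℤ) - q.1| = 1) := by
    refine fun p q hpq => or_iff_not_imp_left.2 fun h => ?_
    by_contra hcol
    rw [hM_off p q h] at hpq
    exact hpq (hDzero p q (fun e => h (congrArg Prod.fst e)) (fun h' => h h'.1) hcol)
  have hcoup : ∀ (a b : Fin m) j, |(a : ℤ) - b| = 1 → M (a, j) (b, j) ≠ 0 := by
    intro a b j hab
    have hne : a ≠ b := by rintro rfl; simp at hab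
    rw [hM_off (a, j) (b, j) hne, hDhor a b j hab, neg_ne_zero]
    positivity
  exact ⟨linearIndependent_rows_one_le_of_blockTridiagonal hsupp hcoup,
    linearIndependent_rows_add_two_le_of_blockTridiagonal hsupp hcoup⟩
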